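/- arXiv:1402.3909 — 7 statements merged into one kernel-verified Lean document; each statement's English description precedes it below -/
import Mathlib

section
/- Let M be a matroid of rank k, S₁ a p₁-family of independent sets, S₂ a p₂-family of independent sets. If Ŝ₁ is (k−p₁)-representative for S₁ and Ŝ₂ is (k−p₂)-representative for S₂, then Ŝ₁ • Ŝ₂ is (k−p₁−p₂)-representative for S₁ • S₂. -/
/-- `q`-representative subfamily. -/
def IsRepFamily {α : Type*} (M : Matroid α) (q : ℕ) (S' S : Set (Set α)) : Prop :=
  S' ⊆ S ∧ ∀ Y : Set α, Y ⊆ M.E → Y.Finite → Y.ncard ≤ q →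
    (∃ X ∈ S, Disjoint X Y ∧ M.Indep (X ∪ Y)) →
    ∃ X' ∈ S', Disjoint X' Y ∧ M.Indep (X' ∪ Y)

/-- The product `L₁ • L₂` of two families of independent sets of a matroid. -/
def bulletProd {α : Type*} (M : Matroid α) (L₁ L₂ : Set (Set α)) : Set (Set α) :=
  {Z | ∃ X ∈ L₁, ∃ Y ∈ L₂, Disjoint X Y ∧ M.Indep (X ∪ Y) ∧ Z = X ∪ Y}

/-!
Replace the two factors one at a time. If `X₁ ∪ X₂` is independent and disjoint from `Y`, then
`X₂ ∪ Y` is a test set for `S₁`, so `X₁` can be traded for some `X₁' ∈ Ŝ₁` keeping `X₁' ∪ X₂ ∪ Y`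
independent; symmetrically for the second factor. The size constraint on the test sets is harmless:
for a `p`-family in a matroid of rank `k`, any `Y` that extends a member to an independent set
already has at most `k - p` elements, so a `(k - p)`-representative family represents it against
every finite `Y`.
-/

open Set

namespace Matroid

variable {α : Type*} {M : Matroid α} {I B : Set α}

theorem Indep.ncard_le_ncard_of_isBase [M.RankFinite] (hI : M.Indep I) (hB : M.IsBase B) :
    I.ncard ≤ B.ncard := by
  obtain ⟨B', hB', hIB'⟩ := hI.exists_isBase_superset
  calc I.ncard ≤ B'.ncard := ncard_le_ncard hIB' hB'.finite
    _ = B.ncard := hB'.ncard_eq_ncard_of_isBase hB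

end Matroid

section

variable {α : Type*} {M : Matroid α} {q p : ℕ} {S S' T T' U : Set (Set α)}

theorem IsRepFamily.trans (h : IsRepFamily M q S' S) (h' : IsRepFamily M q S T) :
    IsRepFamily M q S' T :=
  ⟨h.1.trans h'.1, fun Y hYE hYfin hYq hX ↦ h.2 Y hYE hYfin hYq (h'.2 Y hYE hYfin hYq hX)⟩

theorem IsRepFamily.of_isBase [M.RankFinite] {B : Set α} (hB : M.IsBase B)
    (hS : ∀ X ∈ S, M.Indep X ∧ X.ncard = p) (h : IsRepFamily M (B.ncard - p) S' S) (q : ℕ) :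
    IsRepFamily M q S' S := by
  refine ⟨h.1, fun Y hYE hYfin _ ⟨X, hX, hXY, hi⟩ ↦ h.2 Y hYE hYfin ?_ ⟨X, hX, hXY, hi⟩⟩
  have hcard := ncard_union_eq hXY (hS X hX).1.finite hYfin
  have := hi.ncard_le_ncard_of_isBase hB
  have := (hS X hX).2
  omega

theorem bulletProd_comm (L₁ L₂ : Set (Set α)) : bulletProd M L₁ L₂ = bulletProd M L₂ L₁ := by
  ext Z
  constructor <;>
  · rintro ⟨X, hX, Y, hY, hXY, hi, rfl⟩
    exact ⟨Y, hY, X, hX, hXY.symm, union_comm X Y ▸ hi, union_comm X Y⟩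

theorem IsRepFamily.bulletProd_left {q₁ : ℕ} (h : IsRepFamily M q₁ S' S)
    (hU : ∀ X ∈ U, X.Finite ∧ X.ncard ≤ p) (hq : q + p ≤ q₁) :
    IsRepFamily M q (bulletProd M S' U) (bulletProd M S U) := by
  refine ⟨fun Z ⟨X, hX, W, hW, hXW, hi, hZ⟩ ↦ ⟨X, h.1 hX, W, hW, hXW, hi, hZ⟩, ?_⟩
  rintro Y hYE hYfin hYq ⟨_, ⟨X, hX, W, hW, hXW, hi, rfl⟩, hXWY, hiY⟩
  rw [disjoint_union_left] at hXWY
  have htest : (W ∪ Y).ncard ≤ q₁ := by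
    have := ncard_union_le W Y
    have := (hU W hW).2
    omega
  obtain ⟨X', hX', hX'WY, hiX'⟩ := h.2 (W ∪ Y)
    (union_subset (hi.subset subset_union_right).subset_ground hYE) ((hU W hW).1.union hYfin)
    htest ⟨X, hX, disjoint_union_right.2 ⟨hXW, hXWY.1⟩, by rwa [← union_assoc]⟩
  rw [← union_assoc] at hiX'
  rw [disjoint_union_right] at hX'WY
  exact ⟨X' ∪ W, ⟨X', hX', W, hW, hX'WY.1, hiX'.subset subset_union_left, rfl⟩,
    disjoint_union_left.2 ⟨hX'WY.2, hXWY.2⟩, hiX'⟩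

theorem IsRepFamily.bulletProd_right {q₂ : ℕ} (h : IsRepFamily M q₂ T' T)
    (hU : ∀ X ∈ U, X.Finite ∧ X.ncard ≤ p) (hq : q + p ≤ q₂) :
    IsRepFamily M q (bulletProd M U T') (bulletProd M U T) := by
  rw [bulletProd_comm, bulletProd_comm U]
  exact h.bulletProd_left hU hq

end

/-- If `M` has rank `k`, `S₁` is a `p₁`-family of independent sets, `S₂` a `p₂`-family of
independent sets, `Ŝ₁` is `(k−p₁)`-representative for `S₁`, and `Ŝ₂` is `(k−p₂)`-representative
for `S₂`, then `Ŝ₁ • Ŝ₂` is `(k−p₁−p₂)`-representative for `S₁ • S₂`. -/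
theorem repFamily_bulletProd {α : Type*} (M : Matroid α) (k p₁ p₂ : ℕ)
    (hrank : ∃ B, M.IsBase B ∧ B.Finite ∧ B.ncard = k)
    (S₁ S₂ Shat₁ Shat₂ : Set (Set α))
    (hS₁ : ∀ X ∈ S₁, M.Indep X ∧ X.ncard = p₁)
    (hS₂ : ∀ X ∈ S₂, M.Indep X ∧ X.ncard = p₂)
    (h1 : IsRepFamily M (k - p₁) Shat₁ S₁)
    (h2 : IsRepFamily M (k - p₂) Shat₂ S₂) :
    IsRepFamily M (k - p₁ - p₂) (bulletProd M Shat₁ Shat₂) (bulletProd M S₁ S₂) := by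
  obtain ⟨B, hB, hBfin, rfl⟩ := hrank
  have := hB.rankFinite_of_finite hBfin
  have hfin₁ : ∀ X ∈ Shat₁, X.Finite ∧ X.ncard ≤ p₁ :=
    fun X hX ↦ ⟨(hS₁ X (h1.1 hX)).1.finite, (hS₁ X (h1.1 hX)).2.le⟩
  have hfin₂ : ∀ X ∈ S₂, X.Finite ∧ X.ncard ≤ p₂ :=
    fun X hX ↦ ⟨(hS₂ X hX).1.finite, (hS₂ X hX).2.le⟩
  set q := B.ncard - p₁ - p₂
  have hleft : IsRepFamily M q (bulletProd M Shat₁ S₂) (bulletProd M S₁ S₂) :=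
    (h1.of_isBase hB hS₁ (q + p₂)).bulletProd_left hfin₂ le_rfl
  have hright : IsRepFamily M q (bulletProd M Shat₁ Shat₂) (bulletProd M Shat₁ S₂) :=
    (h2.of_isBase hB hS₂ (q + p₁)).bulletProd_right hfin₁ le_rfl
  exact hright.trans hleft
end

section
/- For a uniform matroid over a ground set of size n with rank p+q, and any p-family S of subsets, there exists a q-representative subfamily of S of size at most C(p+q, p). -/
/-!
Take an inclusion-minimal representative subfamily `S'`. Minimality gives every `X ∈ S'` a set
`Y_X` with `#Y_X ≤ q`, disjoint from `X` but meeting every other member of `S'`: a Bollobás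
set-pair system. For a uniformly random ordering of the ground set, the event "all of `X` comes
before all of `Y_X`" has probability `1 / C(p + #Y_X, p) ≥ 1 / C(p + q, p)`, and these events are
pairwise disjoint, so `#S' ≤ C(p + q, p)`.
-/

open Finset

lemma exists_perm_image_eq_self_lt {n : ℕ} {P A : Finset (Fin n)} (hA : A ⊆ P) :
    ∃ π : Equiv.Perm (Fin n), P.image π = P ∧ ∀ x ∈ A, ∀ y ∈ P, y ∉ A → π x < π y := by
  set C : Finset (Equiv.Perm (Fin n)) := {π | ∀ z, π z ∈ P ↔ z ∈ P}
  obtain ⟨π, hπC, hmin⟩ := C.exists_min_image (fun π => ∑ x ∈ A, (π x : ℕ)) ⟨1, by simp [C]⟩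
  have hπP : ∀ z, π z ∈ P ↔ z ∈ P := (mem_filter.1 hπC).2
  refine ⟨π, ?_, fun x hx y hy hyA => ?_⟩
  · refine eq_of_subset_of_card_le (fun z hz => ?_) (card_image_of_injective _ π.injective).ge
    obtain ⟨w, hw, rfl⟩ := mem_image.1 hz
    exact (hπP w).2 hw
  by_contra! hle
  have hxy : π y < π x := hle.lt_of_ne (π.injective.ne (ne_of_mem_of_not_mem hx hyA).symm)
  -- exchanging the values at `x` and `y` lowers the sum over `A`
  set π' := π.trans (Equiv.swap (π x) (π y))
  have hπ'C : π' ∈ C := by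
    refine mem_filter.2 ⟨mem_univ _, fun z => ?_⟩
    have hxP : π x ∈ P := (hπP x).2 (hA hx)
    have hyP : π y ∈ P := (hπP y).2 hy
    simp only [π', Equiv.trans_apply, Equiv.swap_apply_def]
    split_ifs with h₁ h₂ <;> simp_all
  have hlt : ∑ z ∈ A, (π' z : ℕ) < ∑ z ∈ A, (π z : ℕ) := by
    refine sum_lt_sum (fun z hz => ?_) ⟨x, hx, by simpa [π'] using hxy⟩
    by_cases hzx : z = x
    · subst hzx; simp [π', hxy.le]
    · have hzy : z ≠ y := ne_of_mem_of_not_mem hz hyA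
      simp [π', Equiv.swap_apply_of_ne_of_ne (π.injective.ne hzx) (π.injective.ne hzy)]
  exact hlt.not_ge (hmin π' hπ'C)

section Orderings

variable {α : Type*} [DecidableEq α] [Fintype α] {n : ℕ}

def orderingsBefore (n : ℕ) (X Y : Finset α) : Finset (α ≃ Fin n) :=
  {σ | ∀ a ∈ X, ∀ b ∈ Y, σ a < σ b}

lemma disjoint_orderingsBefore {X₁ Y₁ X₂ Y₂ : Finset α} (h₁ : ¬Disjoint X₁ Y₂)
    (h₂ : ¬Disjoint X₂ Y₁) : Disjoint (orderingsBefore n X₁ Y₁) (orderingsBefore n X₂ Y₂) := by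
  obtain ⟨a, ha₁, ha₂⟩ := not_disjoint_iff.1 h₁
  obtain ⟨b, hb₂, hb₁⟩ := not_disjoint_iff.1 h₂
  refine disjoint_left.2 fun σ hσ₁ hσ₂ => ?_
  exact lt_asymm ((mem_filter.1 hσ₁).2 a ha₁ b hb₁) ((mem_filter.1 hσ₂).2 b hb₂ a ha₂)

/-- Sorting the values of `σ` on `X ∪ Y` so that `X` comes first is at most
`C(#X + #Y, #X)`-to-one, since `σ` is recovered from the sorted ordering and `σ '' X`. -/
lemma card_le_card_orderingsBefore_mul_choose {X Y : Finset α} (hXY : Disjoint X Y) :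
    Fintype.card (α ≃ Fin n) ≤ #(orderingsBefore n X Y) * (#X + #Y).choose #X := by
  choose! π hπP hπlt using fun (P A : Finset (Fin n)) (hA : A ⊆ P) =>
    exists_perm_image_eq_self_lt hA
  set U := X ∪ Y
  have hXU (σ : α ≃ Fin n) : X.image σ ⊆ U.image σ := image_subset_image subset_union_left
  set sort : (α ≃ Fin n) → (α ≃ Fin n) := fun σ => σ.trans (π (U.image σ) (X.image σ))
  have hsortU (σ : α ≃ Fin n) : U.image (sort σ) = U.image σ := by
    rw [Equiv.coe_trans, ← image_image, hπP _ _ (hXU σ)]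
  have hsort_mem (σ : α ≃ Fin n) : sort σ ∈ orderingsBefore n X Y := by
    refine mem_filter.2 ⟨mem_univ _, fun a ha b hb =>
      hπlt _ _ (hXU σ) _ (mem_image_of_mem σ ha) _ (mem_image_of_mem σ (mem_union_right X hb))
        fun hbX => ?_⟩
    obtain ⟨c, hc, hcb⟩ := mem_image.1 hbX
    exact disjoint_left.1 hXY (σ.injective hcb ▸ hc) hb
  have hfibre (τ : α ≃ Fin n) : #{σ | sort σ = τ} ≤ (#X + #Y).choose #X := by
    calc #{σ | sort σ = τ}
        ≤ #((U.image τ).powersetCard #X) := by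
          refine card_le_card_of_injOn (fun σ => X.image σ) (fun σ hσ => ?_) ?_
          · rw [mem_coe, mem_filter] at hσ
            rw [mem_coe, mem_powersetCard, ← hσ.2, hsortU]
            exact ⟨hXU σ, card_image_of_injective _ σ.injective⟩
          · intro σ₁ hσ₁ σ₂ hσ₂ hX
            rw [mem_coe, mem_filter] at hσ₁ hσ₂
            have hU : U.image σ₁ = U.image σ₂ := by rw [← hsortU, hσ₁.2, ← hσ₂.2, hsortU]
            have hsort : sort σ₁ = sort σ₂ := hσ₁.2.trans hσ₂.2.symm
            simp only [sort, hU, show X.image σ₁ = X.image σ₂ from hX] at hsort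
            exact Equiv.ext fun a => (π _ _).injective (DFunLike.congr_fun hsort a)
      _ = (#X + #Y).choose #X := by
          rw [card_powersetCard, card_image_of_injective _ τ.injective, card_union_of_disjoint hXY]
  calc Fintype.card (α ≃ Fin n) = #(univ : Finset (α ≃ Fin n)) := card_univ.symm
    _ ≤ (#X + #Y).choose #X * #(orderingsBefore n X Y) :=
        card_le_mul_card_image_of_maps_to (fun σ _ => hsort_mem σ) _ fun τ _ => hfibre τ
    _ = _ := mul_comm _ _

theorem bollobas_card_le_choose {ι : Type*} (s : Finset ι) (A B : ι → Finset α) {p q : ℕ}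
    (hA : ∀ i ∈ s, #(A i) = p) (hB : ∀ i ∈ s, #(B i) ≤ q)
    (hAB : ∀ i ∈ s, Disjoint (A i) (B i))
    (hcross : ∀ i ∈ s, ∀ j ∈ s, i ≠ j → ¬Disjoint (A i) (B j)) :
    #s ≤ (p + q).choose p := by
  set N := Fintype.card (α ≃ Fin (Fintype.card α))
  have hN : 0 < N := Fintype.card_pos_iff.2 ⟨Fintype.equivFin α⟩
  set E : ι → Finset (α ≃ Fin (Fintype.card α)) := fun i => orderingsBefore _ (A i) (B i)
  have hE : ∀ i ∈ s, N ≤ #(E i) * (p + q).choose p := fun i hi =>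
    (card_le_card_orderingsBefore_mul_choose (hAB i hi)).trans <| by
      rw [hA i hi]
      exact Nat.mul_le_mul_left _ (Nat.choose_le_choose p (by have := hB i hi; omega))
  have hsum : ∑ i ∈ s, #(E i) ≤ N := by
    rw [← card_biUnion fun i hi j hj hij =>
      disjoint_orderingsBefore (hcross i hi j hj hij) (hcross j hj i hi hij.symm)]
    exact card_le_univ _
  have : N * #s ≤ N * (p + q).choose p :=
    calc N * #s = ∑ _i ∈ s, N := by rw [sum_const, smul_eq_mul, mul_comm]
      _ ≤ ∑ i ∈ s, #(E i) * (p + q).choose p := sum_le_sum hE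
      _ = (∑ i ∈ s, #(E i)) * (p + q).choose p := (sum_mul _ _ _).symm
      _ ≤ N * (p + q).choose p := Nat.mul_le_mul_right _ hsum
  exact Nat.le_of_mul_le_mul_left this hN

end Orderings

section Representative

variable {α : Type*}

def IsRepresentative (q : ℕ) (S S' : Finset (Finset α)) : Prop :=
  ∀ Y : Finset α, #Y ≤ q → (∃ X ∈ S, Disjoint X Y) → ∃ X' ∈ S', Disjoint X' Y

variable [DecidableEq α]

lemma exists_isRepresentative_not_erase (q : ℕ) (S : Finset (Finset α)) :
    ∃ S' ⊆ S, IsRepresentative q S S' ∧ ∀ X ∈ S', ¬IsRepresentative q S (S'.erase X) := by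
  classical
  obtain ⟨S', hS', hmin⟩ := exists_min_image {T ∈ S.powerset | IsRepresentative q S T} card
    ⟨S, mem_filter.2 ⟨mem_powerset_self S, fun _ _ h => h⟩⟩
  obtain ⟨hsub, hrep⟩ := mem_filter.1 hS'
  refine ⟨S', mem_powerset.1 hsub, hrep, fun X hX hrep' => ?_⟩
  have := hmin _ (mem_filter.2 ⟨mem_powerset.2 ((erase_subset X S').trans
    (mem_powerset.1 hsub)), hrep'⟩)
  exact (card_erase_lt_of_mem hX).not_ge this

lemma exists_witness_of_not_isRepresentative_erase {q : ℕ} {S S' : Finset (Finset α)}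
    {X : Finset α}
    (hrep : IsRepresentative q S S') (hX : ¬IsRepresentative q S (S'.erase X)) :
    ∃ Y : Finset α, #Y ≤ q ∧ Disjoint X Y ∧ ∀ X' ∈ S', X' ≠ X → ¬Disjoint X' Y := by
  simp only [IsRepresentative, not_forall, not_exists, not_and] at hX
  obtain ⟨Y, hYq, hS, hnone⟩ := hX
  obtain ⟨X', hX', hX'Y⟩ := hrep Y hYq hS
  have : X' = X := by_contra fun hne => hnone X' (mem_erase.2 ⟨hne, hX'⟩) hX'Y
  exact ⟨Y, hYq, this ▸ hX'Y, fun X'' hX'' hne => hnone X'' (mem_erase.2 ⟨hne, hX''⟩)⟩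

end Representative

theorem exists_repFamily_uniform_general {α : Type*} [DecidableEq α] [Fintype α] (p q : ℕ)
    (S : Finset (Finset α)) (hS : ∀ X ∈ S, X.card = p) :
    ∃ S' ⊆ S, S'.card ≤ (p + q).choose p ∧
      ∀ Y : Finset α, Y.card ≤ q →
        (∃ X ∈ S, Disjoint X Y) → ∃ X' ∈ S', Disjoint X' Y := by
  obtain ⟨S', hsub, hrep, hmin⟩ := exists_isRepresentative_not_erase q S
  choose! Y hYq hXY hY using fun X hX =>
    exists_witness_of_not_isRepresentative_erase hrep (hmin X hX)
  refine ⟨S', hsub, ?_, hrep⟩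
  exact bollobas_card_le_choose S' id Y (fun X hX => hS X (hsub hX)) hYq hXY
    fun X hX X' hX' hne => hY X' hX' X hX hne

/-- For the uniform matroid of rank `p+q` over a ground set of size `n`, every `p`-family `S`
of subsets has a `q`-representative subfamily of size at most `C(p+q, p)`: a subfamily `S'`
such that for every `Y` of size at most `q`, if some `X ∈ S` is disjoint from `Y` then some
`X' ∈ S'` is disjoint from `Y`. -/
theorem exists_repFamily_uniform {α : Type*} [DecidableEq α] [Fintype α] (n p q : ℕ)
    (hcard : Fintype.card α = n)
    (S : Finset (Finset α)) (hS : ∀ X ∈ S, X.card = p) :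
    ∃ S' ⊆ S, S'.card ≤ (p + q).choose p ∧
      ∀ Y : Finset α, Y.card ≤ q →
        (∃ X ∈ S, Disjoint X Y) → ∃ X' ∈ S', Disjoint X' Y :=
  exists_repFamily_uniform_general p q S hS
end

section
/- With t = ⌈(1/(x^p(1−x)^q)) · (p²+q²+1) · log n⌉ independent random subsets F₁,…,F_t of an n-element universe (each element included with probability x), the probability that there exist disjoint sets A of size p and B of size q such that no Fᵢ satisfies A ⊆ Fᵢ and B ∩ Fᵢ = ∅ is at most 1/n. -/
/-!
Union bound. A fixed disjoint pair `(A, B)` with `|A| = p`, `|B| = q` is separated by a single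
random set with probability `s = x^p (1-x)^q`, so it is separated by none of the `t` independent
sets with probability `(1 - s)^t ≤ exp(-s t) ≤ n^{-(p²+q²+1)}`. There are at most
`n^p n^q ≤ n^{p²+q²}` such pairs, so the probability of a bad pair is at most `1/n`.
-/

open MeasureTheory ENNReal Finset
open scoped NNReal

set_option linter.deprecated false

namespace PMF

variable {p : ℝ≥0} (h : p ≤ 1)

lemma bernoulli_toMeasure_singleton_true : (bernoulli p h).toMeasure {true} = p := by
  rw [toMeasure_apply_singleton _ _ (measurableSet_singleton _), bernoulli_apply, cond_true]

lemma bernoulli_toMeasure_singleton_false : (bernoulli p h).toMeasure {false} = 1 - p := by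
  rw [toMeasure_apply_singleton _ _ (measurableSet_singleton _), bernoulli_apply, cond_false,
    ENNReal.coe_sub, ENNReal.coe_one]

end PMF

/-- The indicators of the sets `F` with `A ⊆ F` and `B ∩ F = ∅`. -/
def separatingSet {U : Type*} (A B : Finset U) : Set (U → Bool) :=
  {f | (∀ a ∈ A, f a = true) ∧ ∀ b ∈ B, f b = false}

lemma measure_pi_bernoulli_separatingSet {U : Type*} [Fintype U] {p : ℝ≥0} (h : p ≤ 1)
    {A B : Finset U} (hAB : Disjoint A B) :
    Measure.pi (fun _ : U => (PMF.bernoulli p h).toMeasure) (separatingSet A B)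
      = (p : ℝ≥0∞) ^ #A * (1 - p) ^ #B := by
  classical
  set D : U → Set Bool := fun u => {b | (u ∈ A → b = true) ∧ (u ∈ B → b = false)}
  have hD : separatingSet A B = Set.univ.pi D := by
    ext f
    simp only [separatingSet, D, Set.mem_univ_pi, Set.mem_ofPred_eq, forall_and]
  have hmeas : ∀ u, (PMF.bernoulli p h).toMeasure (D u) =
      (if u ∈ A then (p : ℝ≥0∞) else 1) * (if u ∈ B then 1 - (p : ℝ≥0∞) else 1) := by
    intro u
    by_cases hA : u ∈ A
    · have hB : u ∉ B := disjoint_left.mp hAB hA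
      have : D u = {true} := by ext b; simp [D, hA, hB]
      rw [this, PMF.bernoulli_toMeasure_singleton_true]
      simp [hA, hB]
    by_cases hB : u ∈ B
    · have : D u = {false} := by ext b; simp [D, hA, hB]
      rw [this, PMF.bernoulli_toMeasure_singleton_false]
      simp [hA, hB]
    · have : D u = Set.univ := by ext b; simp [D, hA, hB]
      rw [this, measure_univ]
      simp [hA, hB]
  rw [hD, Measure.pi_pi, Finset.prod_congr rfl fun u _ => hmeas u, prod_mul_distrib,
    prod_ite_mem, prod_ite_mem, univ_inter, univ_inter, prod_const, prod_const]

lemma measure_pi_forall_notMem {ι α : Type*} [Fintype ι] [MeasurableSpace α] (ν : Measure α)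
    [IsProbabilityMeasure ν] {G : Set α} (hG : MeasurableSet G) :
    Measure.pi (fun _ : ι => ν) {F | ∀ i, F i ∉ G} = (1 - ν G) ^ Fintype.card ι := by
  have : {F : ι → α | ∀ i, F i ∉ G} = Set.univ.pi fun _ => Gᶜ := by ext; simp
  rw [this, Measure.pi_pi, prob_compl_eq_one_sub hG, prod_const, card_univ]

lemma measure_exists_disjoint_pair_le {U Ω : Type*} [Fintype U] [MeasurableSpace Ω]
    (μ : Measure Ω) (p q : ℕ) (E : Finset U → Finset U → Set Ω) (c : ℝ≥0∞)
    (hE : ∀ A B, Disjoint A B → #A = p → #B = q → μ (E A B) ≤ c) :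
    μ {ω | ∃ A B : Finset U, Disjoint A B ∧ #A = p ∧ #B = q ∧ ω ∈ E A B}
      ≤ (Fintype.card U).choose p * (Fintype.card U).choose q * c := by
  classical
  set pairs : Finset (Finset U × Finset U) :=
    (powersetCard p univ ×ˢ powersetCard q univ).filter fun AB => Disjoint AB.1 AB.2
  have hcover : {ω | ∃ A B : Finset U, Disjoint A B ∧ #A = p ∧ #B = q ∧ ω ∈ E A B}
      ⊆ ⋃ AB ∈ pairs, E AB.1 AB.2 := by
    rintro ω ⟨A, B, hAB, hA, hB, hω⟩
    exact Set.mem_biUnion (x := (A, B)) (by simp [pairs, hA, hB, hAB]) hω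
  have hpairs : #pairs ≤ (Fintype.card U).choose p * (Fintype.card U).choose q := by
    refine (card_filter_le _ _).trans_eq ?_
    rw [card_product, card_powersetCard, card_powersetCard, card_univ]
  calc _ ≤ μ (⋃ AB ∈ pairs, E AB.1 AB.2) := measure_mono hcover
    _ ≤ ∑ AB ∈ pairs, μ (E AB.1 AB.2) := measure_biUnion_finset_le _ _
    _ ≤ ∑ _AB ∈ pairs, c := sum_le_sum fun AB hAB => by
        simp only [pairs, mem_filter, mem_product, mem_powersetCard_univ] at hAB
        exact hE _ _ hAB.2 hAB.1.1 hAB.1.2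
    _ = #pairs * c := by rw [sum_const, nsmul_eq_mul]
    _ ≤ _ := by gcongr; exact_mod_cast hpairs

lemma one_sub_pow_le_inv_pow {s n : ℝ} (hs : s ≤ 1) (hn : 0 < n) {k t : ℕ}
    (hkt : k * Real.log n ≤ s * t) : (1 - s) ^ t ≤ (n ^ k)⁻¹ :=
  calc (1 - s) ^ t ≤ Real.exp (-s) ^ t :=
        pow_le_pow_left₀ (by linarith) (Real.one_sub_le_exp_neg s) t
    _ = Real.exp (-(s * t)) := by rw [← Real.exp_nat_mul]; ring_nf
    _ ≤ Real.exp (-(k * Real.log n)) := by gcongr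
    _ = (n ^ k)⁻¹ := by rw [Real.exp_neg, ← Real.log_pow, Real.exp_log (by positivity)]

lemma choose_mul_choose_mul_one_sub_pow_le {n p q t : ℕ} (hn : 1 ≤ n) {s : ℝ} (hs : s ≤ 1)
    (hst : ((p ^ 2 + q ^ 2 + 1 : ℕ) : ℝ) * Real.log n ≤ s * t) :
    (n.choose p * n.choose q : ℝ) * (1 - s) ^ t ≤ 1 / n := by
  have hn' : (1 : ℝ) ≤ n := by exact_mod_cast hn
  have hchoose : (n.choose p * n.choose q : ℝ) ≤ n ^ (p + q) := by
    rw [pow_add]; gcongr <;> exact_mod_cast Nat.choose_le_pow _ _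
  have hexp : (n : ℝ) ^ (p + q + 1) ≤ n ^ (p ^ 2 + q ^ 2 + 1) :=
    pow_le_pow_right₀ hn' <| by
      nlinarith [Nat.le_self_pow two_ne_zero p, Nat.le_self_pow two_ne_zero q]
  calc (n.choose p * n.choose q : ℝ) * (1 - s) ^ t
      ≤ n ^ (p + q) * ((n : ℝ) ^ (p ^ 2 + q ^ 2 + 1))⁻¹ :=
        mul_le_mul hchoose (one_sub_pow_le_inv_pow hs (by positivity) hst)
          (pow_nonneg (by linarith) t) (by positivity)
    _ = n ^ (p + q + 1) / n ^ (p ^ 2 + q ^ 2 + 1) / n := by field_simp; ring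
    _ ≤ 1 / n := by gcongr; exact div_le_one_of_le₀ hexp (by positivity)

/-- With `t = ⌈(1/(x^p (1−x)^q)) · (p²+q²+1) · log n⌉` independent random subsets
`F₁, …, F_t` of an `n`-element universe (each element included independently with
probability `x`, `0 < x < 1`, and `n ≥ 2`), the probability that there exist disjoint sets
`A` of size `p` and `B` of size `q` such that no `Fᵢ` satisfies `A ⊆ Fᵢ` and `B ∩ Fᵢ = ∅`
is at most `1/n`. -/
theorem prob_exists_bad_pair {U : Type*} [Fintype U] (n p q : ℕ) (hn : 2 ≤ n)
    (hcard : Fintype.card U = n) (x : ℝ) (hx0 : 0 < x) (hx1 : x < 1) (t : ℕ)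
    (ht : t = ⌈(1 / (x ^ p * (1 - x) ^ q)) * ((p ^ 2 + q ^ 2 + 1 : ℕ) : ℝ) * Real.log n⌉₊) :
    (Measure.pi fun _ : Fin t => Measure.pi fun _ : U =>
        (PMF.bernoulli (Real.toNNReal x) (Real.toNNReal_le_one.mpr hx1.le)).toMeasure)
      {F | ∃ A B : Finset U, Disjoint A B ∧ A.card = p ∧ B.card = q ∧
        ∀ i : Fin t, ¬ ((∀ a ∈ A, F i a = true) ∧ (∀ b ∈ B, F i b = false))}
      ≤ 1 / (n : ℝ≥0∞) := by
  set ν : Measure (U → Bool) :=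
    Measure.pi fun _ : U => (PMF.bernoulli x.toNNReal (Real.toNNReal_le_one.mpr hx1.le)).toMeasure
    with hν
  set s := x ^ p * (1 - x) ^ q
  have hx1' : 0 < 1 - x := sub_pos.mpr hx1
  have hs_pos : 0 < s := by positivity
  have hs_le : s ≤ 1 := mul_le_one₀ (pow_le_one₀ hx0.le hx1.le) (by positivity)
    (pow_le_one₀ hx1'.le (by linarith))
  have hst : ((p ^ 2 + q ^ 2 + 1 : ℕ) : ℝ) * Real.log n ≤ s * t := by
    have hceil := Nat.le_ceil ((1 / s) * ((p ^ 2 + q ^ 2 + 1 : ℕ) : ℝ) * Real.log n)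
    rw [← ht] at hceil
    calc _ = s * ((1 / s) * ((p ^ 2 + q ^ 2 + 1 : ℕ) : ℝ) * Real.log n) := by field_simp
      _ ≤ s * t := by gcongr
  have hmiss : ∀ A B : Finset U, Disjoint A B → #A = p → #B = q →
      Measure.pi (fun _ : Fin t => ν) {F | ∀ i, F i ∉ separatingSet A B}
        = ENNReal.ofReal ((1 - s) ^ t) := by
    intro A B hAB hA hB
    rw [measure_pi_forall_notMem _ (Set.toFinite _).measurableSet, hν,
      measure_pi_bernoulli_separatingSet _ hAB, hA, hB, Fintype.card_fin]
    change (1 - ENNReal.ofReal x ^ p * (1 - ENNReal.ofReal x) ^ q) ^ t = _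
    rw [← ofReal_one, ← ofReal_sub _ hx0.le, ← ofReal_pow hx0.le, ← ofReal_pow hx1'.le,
      ← ofReal_mul (by positivity), ← ofReal_sub _ hs_pos.le, ← ofReal_pow (by linarith)]
  calc _ ≤ (n.choose p * n.choose q : ℝ≥0∞) * ENNReal.ofReal ((1 - s) ^ t) :=
        hcard ▸ measure_exists_disjoint_pair_le _ p q
          (fun A B => {F : Fin t → U → Bool | ∀ i, F i ∉ separatingSet A B}) _
          fun A B hAB hA hB => (hmiss A B hAB hA hB).le
    _ = ENNReal.ofReal ((n.choose p * n.choose q : ℝ) * (1 - s) ^ t) := by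
        rw [ofReal_mul (by positivity)]; norm_cast
    _ ≤ ENNReal.ofReal (1 / n) :=
        ofReal_le_ofReal (choose_mul_choose_mul_one_sub_pow_le (by omega) hs_le hst)
    _ = 1 / n := by rw [ofReal_div_of_pos (by positivity), ofReal_one, ofReal_natCast]
end

section
/- For every n and k there exists a k-perfect family of hash functions from a universe of size n to a universe of size k² of size O(k^{O(1)} · log n); in particular, for every n ≥ k there exists a family of functions f₁,…,f_t : [n] → [k²] with t ≤ poly(k) · log n such that for every S ⊆ [n] with |S| = k some fᵢ is injective on S. -/
/-!
A uniformly random `g : [n] → [k²]` collides on a fixed `k`-set `S` with probability at most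
`(k choose 2) / k² < 1/2`, since each of the `k choose 2` pairs collides with probability `1/k²`.
So `t` independent random functions all fail on `S` with probability below `2⁻ᵗ`, and a union
bound over the `n choose k < 2 ^ (k (log₂ n + 1))` sets shows that `t = k (log₂ n + 1)` random
functions form a `k`-perfect family with positive probability.
-/

open Finset

theorem choose_lt_two_pow_mul_log (n k : ℕ) (hk : 0 < k) :
    n.choose k < 2 ^ (k * (Nat.log 2 n + 1)) :=
  calc n.choose k ≤ n ^ k := Nat.choose_le_pow n k
    _ < (2 ^ (Nat.log 2 n + 1)) ^ k :=
        Nat.pow_lt_pow_left (Nat.lt_pow_succ_log_self one_lt_two n) hk.ne'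
    _ = 2 ^ (k * (Nat.log 2 n + 1)) := by rw [← pow_mul, mul_comm]

theorem two_mul_choose_two_le_sq (k : ℕ) : 2 * k.choose 2 ≤ k ^ 2 := by
  rw [Nat.choose_two_right, sq]
  exact (Nat.mul_div_le _ 2).trans (Nat.mul_le_mul_left _ (Nat.sub_le k 1))

section Counting

variable {α β : Type*} [Fintype α] [DecidableEq α] [Fintype β]

/-- Resetting `g y` to `g x` loses only the value `g y`, which is kept as the second component. -/
def collisionEquiv {x y : α} (hxy : x ≠ y) :
    {g : α → β // g x = g y} × β ≃ (α → β) where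
  toFun p := Function.update p.1.1 y p.2
  invFun g := (⟨Function.update g y (g x), by simp [Function.update_of_ne hxy]⟩, g y)
  left_inv := by
    rintro ⟨⟨g, hg⟩, b⟩
    ext <;> simp [Function.update_of_ne hxy, hg]
  right_inv g := by simp

theorem card_filter_apply_eq_apply_mul_card [DecidableEq β] {x y : α} (hxy : x ≠ y) :
    #{g : α → β | g x = g y} * Fintype.card β = Fintype.card β ^ Fintype.card α := by
  rw [← Fintype.card_subtype, ← Fintype.card_prod, Fintype.card_congr (collisionEquiv hxy),
    Fintype.card_fun]

theorem card_filter_not_injOn_mul_card_le [DecidableEq β] (S : Finset α) :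
    #{g : α → β | ¬ Set.InjOn g S} * Fintype.card β ≤
      (#S).choose 2 * Fintype.card β ^ Fintype.card α := by
  have hcover : ({g : α → β | ¬ Set.InjOn g S} : Finset (α → β)) ⊆
      (S.offDiag.image Sym2.mk.uncurry).biUnion (fun z => {g | (z.map g).IsDiag}) := by
    intro g hg
    simp only [mem_filter, mem_univ, true_and, Set.InjOn, not_forall] at hg
    obtain ⟨x, hx, y, hy, hgxy, hne⟩ := hg
    simp only [mem_biUnion, mem_image, mem_offDiag, mem_filter, mem_univ, true_and]
    exact ⟨s(x, y), ⟨(x, y), ⟨hx, hy, hne⟩, rfl⟩, by simpa using hgxy⟩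
  calc #{g : α → β | ¬ Set.InjOn g S} * Fintype.card β
      ≤ ∑ z ∈ S.offDiag.image Sym2.mk.uncurry, #{g : α → β | (z.map g).IsDiag} *
          Fintype.card β := by
        rw [← sum_mul]
        exact Nat.mul_le_mul_right _ ((card_le_card hcover).trans card_biUnion_le)
    _ = ∑ z ∈ S.offDiag.image Sym2.mk.uncurry, Fintype.card β ^ Fintype.card α := by
        refine sum_congr rfl fun z hz => ?_
        obtain ⟨⟨x, y⟩, ⟨-, -, hxy⟩, rfl⟩ := by simpa only [mem_image, mem_offDiag] using hz
        simpa using card_filter_apply_eq_apply_mul_card (β := β) hxy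
    _ = (#S).choose 2 * Fintype.card β ^ Fintype.card α := by
        rw [sum_const, Sym2.card_image_offDiag, smul_eq_mul]

theorem two_mul_card_filter_not_injOn_le [DecidableEq β] (S : Finset α)
    (hS : #S ^ 2 ≤ Fintype.card β) :
    2 * #{g : α → β | ¬ Set.InjOn g S} ≤ Fintype.card (α → β) := by
  obtain hβ | hβ := (Fintype.card β).eq_zero_or_pos
  · have hS : S = ∅ := by simpa [hβ] using hS
    simp [hS]
  refine Nat.le_of_mul_le_mul_right ?_ hβ
  calc 2 * #{g : α → β | ¬ Set.InjOn g S} * Fintype.card β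
      ≤ 2 * ((#S).choose 2 * Fintype.card β ^ Fintype.card α) := by
        rw [mul_assoc]; exact Nat.mul_le_mul_left 2 (card_filter_not_injOn_mul_card_le S)
    _ ≤ Fintype.card β * Fintype.card β ^ Fintype.card α := by
        rw [← mul_assoc]
        exact Nat.mul_le_mul_right _ ((two_mul_choose_two_le_sq _).trans hS)
    _ = Fintype.card (α → β) * Fintype.card β := by rw [Fintype.card_fun, mul_comm]

end Counting

theorem exists_forall_exists_of_two_mul_card_le {ι G τ : Type*} [Fintype G] [Nonempty G]
    [Fintype τ] (P : ι → G → Prop) [∀ s, DecidablePred (P s)] (T : Finset ι)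
    (hbad : ∀ s ∈ T, 2 * #{g | ¬ P s g} ≤ Fintype.card G) (hT : #T < 2 ^ Fintype.card τ) :
    ∃ f : τ → G, ∀ s ∈ T, ∃ i, P s (f i) := by
  classical
  by_contra! hall
  have hcover : (univ : Finset (τ → G)) ⊆
      T.biUnion (fun s => Fintype.piFinset fun _ => {g | ¬ P s g}) := by
    intro f _
    obtain ⟨s, hs, hf⟩ := hall f
    simpa [Fintype.mem_piFinset] using ⟨s, hs, hf⟩
  have hpos : 0 < Fintype.card G ^ Fintype.card τ := pow_pos Fintype.card_pos _
  refine lt_irrefl (2 ^ Fintype.card τ * Fintype.card G ^ Fintype.card τ) ?_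
  calc 2 ^ Fintype.card τ * Fintype.card G ^ Fintype.card τ
      ≤ 2 ^ Fintype.card τ * ∑ s ∈ T, #{g | ¬ P s g} ^ Fintype.card τ := by
        refine Nat.mul_le_mul_left _ ?_
        simpa using (card_le_card hcover).trans card_biUnion_le
    _ = ∑ s ∈ T, (2 * #{g | ¬ P s g}) ^ Fintype.card τ := by simp [mul_sum, mul_pow]
    _ ≤ ∑ _s ∈ T, Fintype.card G ^ Fintype.card τ :=
        sum_le_sum fun s hs => Nat.pow_le_pow_left (hbad s hs) _
    _ < 2 ^ Fintype.card τ * Fintype.card G ^ Fintype.card τ := by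
        rw [sum_const, smul_eq_mul]
        exact Nat.mul_lt_mul_of_pos_right hT hpos

/-- For every `n ≥ k ≥ 1` there exists a `k`-perfect family of hash functions from a universe
of size `n` to a universe of size `k²` of size `O(k^{O(1)} · log n)`: there is a constant `c`
such that for all such `n, k` there are functions `f₁, …, f_t : [n] → [k²]` with
`t ≤ c · k^c · (log n + 1)` such that for every `S ⊆ [n]` with `|S| = k` some `fᵢ` is
injective on `S`. -/
theorem exists_kPerfect_hash_family :
    ∃ c : ℕ, 0 < c ∧ ∀ n k : ℕ, 0 < k → k ≤ n →
      ∃ (t : ℕ) (f : Fin t → Fin n → Fin (k ^ 2)),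
        t ≤ c * k ^ c * (Nat.log 2 n + 1) ∧
        ∀ S : Finset (Fin n), S.card = k → ∃ i : Fin t, Set.InjOn (f i) ↑S := by
  classical
  refine ⟨1, one_pos, fun n k hk _ => ⟨k * (Nat.log 2 n + 1), ?_⟩⟩
  have : Nonempty (Fin (k ^ 2)) := ⟨⟨0, by positivity⟩⟩
  have hhalf : ∀ S ∈ powersetCard k (univ : Finset (Fin n)),
      2 * #{g : Fin n → Fin (k ^ 2) | ¬ Set.InjOn g S} ≤ Fintype.card (Fin n → Fin (k ^ 2)) :=
    fun S hS => two_mul_card_filter_not_injOn_le S (by simp [mem_powersetCard_univ.1 hS])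
  have hfew : #(powersetCard k (univ : Finset (Fin n))) <
      2 ^ Fintype.card (Fin (k * (Nat.log 2 n + 1))) := by
    simpa using choose_lt_two_pow_mul_log n k hk
  obtain ⟨f, hf⟩ := exists_forall_exists_of_two_mul_card_le _ _ hhalf hfew
  exact ⟨f, by simp, fun S hS => hf S (mem_powersetCard_univ.2 hS)⟩
end

section
/- Let f₁,…,f_t be a (p+q)-perfect family of hash functions from U to [(p+q)²], and let (F̂, χ̂, χ̂') be a (p+q)²-p-q-separating collection over [(p+q)²]. Define F = ⋃_i f_i^{-1}(F̂), and for A of size at most p set χ(A) = ⋃_{i : f_i injective on A} f_i^{-1}(χ̂(f_i(A))), and similarly χ'(B) for B of size at most q using χ̂'. Then (F, χ, χ') is a generalized n-p-q-separating collection over U. -/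
open Finset

/-- The preimage of a finite set `G` under `g`, as a finset of the finite universe `U`. -/
def preimg {U : Type*} [Fintype U] {m : ℕ} (g : U → Fin m) (G : Finset (Fin m)) : Finset U :=
  Finset.univ.filter (fun u => g u ∈ G)

/-- `(F, χ, χ')` is a generalized `p`-`q`-separating collection over the universe `V`:
(1) every `F' ∈ χ(A)` contains `A` (for `|A| ≤ p`), (2) every `F' ∈ χ'(B)` is disjoint from
`B` (for `|B| ≤ q`), and (3) for all pairwise disjoint `A₁, …, A_r` and `B` with
`Σ|Aᵢ| = p` and `|B| = q` there is an `F'` lying in every `χ(Aᵢ)` and in `χ'(B)`. -/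
def IsGenSepColl {V : Type*} (p q : ℕ)
    (F : Finset (Finset V)) (χ χ' : Finset V → Finset (Finset V)) : Prop :=
  (∀ A : Finset V, A.card ≤ p → χ A ⊆ F ∧ ∀ F' ∈ χ A, A ⊆ F') ∧
  (∀ B : Finset V, B.card ≤ q → χ' B ⊆ F ∧ ∀ F' ∈ χ' B, Disjoint F' B) ∧
  (∀ (r : ℕ) (A : Fin r → Finset V) (B : Finset V),
      (∀ i j : Fin r, i ≠ j → Disjoint (A i) (A j)) → (∀ i : Fin r, Disjoint (A i) B) →
      (∑ i, (A i).card) = p → B.card = q →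
      ∃ F', (∀ i : Fin r, F' ∈ χ (A i)) ∧ F' ∈ χ' B)

/-!
An injective hash function turns every configuration `A₁, …, A_r, B` of total size `p + q`
in `U` into a configuration of the same shape in `[(p+q)²]`: sizes and disjointness survive.
So perfectness provides a hash `f i` injective on `⋃ Aᵢ ∪ B`, the base collection separates the
images, and the preimage under `f i` of the separating set separates the original sets.
-/

section Preimage

variable {U : Type*} [Fintype U] {m : ℕ} {g : U → Fin m} {G : Finset (Fin m)}

@[simp]
lemma mem_preimg {u : U} : u ∈ preimg g G ↔ g u ∈ G := by
  simp [preimg]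

lemma subset_preimg_iff {A : Finset U} : A ⊆ preimg g G ↔ A.image g ⊆ G := by
  simp [subset_iff]

lemma disjoint_preimg_iff {B : Finset U} : Disjoint (preimg g G) B ↔ Disjoint G (B.image g) := by
  simp only [disjoint_left, mem_preimg, mem_image]
  exact ⟨fun h a ha ⟨x, hx, hxa⟩ => h (hxa ▸ ha) hx, fun h a ha hb => h ha ⟨a, hb, rfl⟩⟩

end Preimage

lemma Finset.disjoint_image_of_injOn {α β : Type*} [DecidableEq α] [DecidableEq β] {g : α → β}
    {S s t : Finset α} (hg : Set.InjOn g S) (hs : s ⊆ S) (ht : t ⊆ S) (hst : Disjoint s t) :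
    Disjoint (s.image g) (t.image g) := by
  rw [← disjoint_coe, coe_image, coe_image, Set.disjoint_iff_inter_eq_empty,
    ← hg.image_inter (coe_subset.2 hs) (coe_subset.2 ht), ← coe_inter,
    disjoint_iff_inter_eq_empty.1 hst, coe_empty, Set.image_empty]

lemma Finset.card_biUnion_union {α ι : Type*} [DecidableEq α] [Fintype ι] {A : ι → Finset α}
    {B : Finset α} (hA : ∀ i j, i ≠ j → Disjoint (A i) (A j)) (hAB : ∀ i, Disjoint (A i) B) :
    (univ.biUnion A ∪ B).card = ∑ i, (A i).card + B.card := by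
  rw [card_union_of_disjoint ((disjoint_biUnion_left _ _ _).2 fun i _ => hAB i),
    card_biUnion fun i _ j _ h => hA i j h]

section HashPullback

variable {U : Type*} [Fintype U] [DecidableEq U] {m t : ℕ} (f : Fin t → U → Fin m)

def hashPullback (χhat : Finset (Fin m) → Finset (Finset (Fin m))) (A : Finset U) :
    Finset (Finset U) :=
  (univ.filter fun i : Fin t => (A.image (f i)).card = A.card).biUnion
    fun i => (χhat (A.image (f i))).image (preimg (f i))

variable {f}

lemma mem_hashPullback {χhat : Finset (Fin m) → Finset (Finset (Fin m))} {A F' : Finset U} :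
    F' ∈ hashPullback f χhat A ↔
      ∃ i, Set.InjOn (f i) A ∧ ∃ G ∈ χhat (A.image (f i)), preimg (f i) G = F' := by
  simp [hashPullback, card_image_iff]

lemma preimg_mem_hashPullback {χhat : Finset (Fin m) → Finset (Finset (Fin m))} {A : Finset U}
    {i : Fin t} (hi : Set.InjOn (f i) A) {G : Finset (Fin m)} (hG : G ∈ χhat (A.image (f i))) :
    preimg (f i) G ∈ hashPullback f χhat A :=
  mem_hashPullback.2 ⟨i, hi, G, hG, rfl⟩

lemma hashPullback_subset {Fhat : Finset (Finset (Fin m))}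
    {χhat : Finset (Fin m) → Finset (Finset (Fin m))} {k : ℕ}
    (h : ∀ A, A.card ≤ k → χhat A ⊆ Fhat) {A : Finset U} (hA : A.card ≤ k) :
    hashPullback f χhat A ⊆ univ.biUnion fun i => Fhat.image (preimg (f i)) := by
  intro F' hF'
  obtain ⟨i, hi, G, hG, rfl⟩ := mem_hashPullback.1 hF'
  have hG' : G ∈ Fhat := h _ ((card_image_of_injOn hi).trans_le hA) hG
  exact mem_biUnion.2 ⟨i, mem_univ i, mem_image_of_mem _ hG'⟩

theorem IsGenSepColl.hashPullback {p q : ℕ} {Fhat : Finset (Finset (Fin m))}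
    {χhat χ'hat : Finset (Fin m) → Finset (Finset (Fin m))}
    (hbase : IsGenSepColl p q Fhat χhat χ'hat)
    (hperfect : ∀ S : Finset U, S.card = p + q → ∃ i, Set.InjOn (f i) S) :
    IsGenSepColl p q (univ.biUnion fun i => Fhat.image (preimg (f i)))
      (hashPullback f χhat) (hashPullback f χ'hat) := by
  obtain ⟨hχhat, hχ'hat, hsep⟩ := hbase
  refine ⟨fun A hA => ⟨hashPullback_subset (fun A hA => (hχhat A hA).1) hA, ?_⟩,
    fun B hB => ⟨hashPullback_subset (fun B hB => (hχ'hat B hB).1) hB, ?_⟩, ?_⟩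
  · intro F' hF'
    obtain ⟨i, hi, G, hG, rfl⟩ := mem_hashPullback.1 hF'
    exact subset_preimg_iff.2 ((hχhat _ ((card_image_of_injOn hi).trans_le hA)).2 G hG)
  · intro F' hF'
    obtain ⟨i, hi, G, hG, rfl⟩ := mem_hashPullback.1 hF'
    exact disjoint_preimg_iff.2 ((hχ'hat _ ((card_image_of_injOn hi).trans_le hB)).2 G hG)
  · intro r A B hA hAB hsum hB
    set S := univ.biUnion A ∪ B
    obtain ⟨i, hi⟩ := hperfect S (by rw [card_biUnion_union hA hAB, hsum, hB])
    have hAS (j : Fin r) : A j ⊆ S :=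
      (subset_biUnion_of_mem A (mem_univ j)).trans subset_union_left
    have hBS : B ⊆ S := subset_union_right
    have hinj {T : Finset U} (hT : T ⊆ S) : Set.InjOn (f i) T := hi.mono (coe_subset.2 hT)
    obtain ⟨G, hGA, hGB⟩ := hsep r (fun j => (A j).image (f i)) (B.image (f i))
      (fun j k hjk => disjoint_image_of_injOn hi (hAS j) (hAS k) (hA j k hjk))
      (fun j => disjoint_image_of_injOn hi (hAS j) hBS (hAB j))
      (by simp only [card_image_of_injOn (hinj (hAS _)), hsum])
      (by rw [card_image_of_injOn (hinj hBS), hB])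
    exact ⟨preimg (f i) G, fun j => preimg_mem_hashPullback (hinj (hAS j)) (hGA j),
      preimg_mem_hashPullback (hinj hBS) hGB⟩

end HashPullback

/-- Pulling back a `(p+q)²`-`p`-`q`-separating collection along a `(p+q)`-perfect family of
hash functions yields a generalized `n`-`p`-`q`-separating collection over `U`. -/
theorem genSepColl_of_hash {U : Type*} [Fintype U] [DecidableEq U] (p q t : ℕ)
    (f : Fin t → U → Fin ((p + q) ^ 2))
    (hperfect : ∀ S : Finset U, S.card = p + q → ∃ i : Fin t, Set.InjOn (f i) ↑S)
    (Fhat : Finset (Finset (Fin ((p + q) ^ 2))))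
    (χhat χ'hat : Finset (Fin ((p + q) ^ 2)) → Finset (Finset (Fin ((p + q) ^ 2))))
    (hbase : IsGenSepColl p q Fhat χhat χ'hat)
    (F : Finset (Finset U)) (χ χ' : Finset U → Finset (Finset U))
    (hF : F = Finset.univ.biUnion (fun i : Fin t => Fhat.image (preimg (f i))))
    (hχ : ∀ A : Finset U, χ A =
        (Finset.univ.filter (fun i : Fin t => (A.image (f i)).card = A.card)).biUnion
          (fun i => (χhat (A.image (f i))).image (preimg (f i))))
    (hχ' : ∀ B : Finset U, χ' B =
        (Finset.univ.filter (fun i : Fin t => (B.image (f i)).card = B.card)).biUnion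
          (fun i => (χ'hat (B.image (f i))).image (preimg (f i)))) :
    IsGenSepColl p q F χ χ' := by
  obtain rfl : χ = hashPullback f χhat := funext hχ
  obtain rfl : χ' = hashPullback f χ'hat := funext hχ'
  subst hF
  exact hbase.hashPullback hperfect
end

section
/- Let M be a linear matroid of rank k represented as above with independent set S of size p₂, and let L be a p₁-family of independent sets of M, each disjoint from S and with X ∪ S independent. If L̂(S) is a (k−p₁−p₂)-representative family (in the contracted matroid M/S) for L(S) = {X : X ∪ S ∈ L • {S}}, then {X ∪ S : X ∈ L̂(S)} is a (k−p₁−p₂)-representative family for L • {S} in M. -/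
/-- The lower part of a column vector: the restriction of `v e : Fin k → 𝔽` to the last
`k − p₂` coordinates. -/
def lowPart {𝔽 E : Type*} {k : ℕ} (p₂ : ℕ) (hp : p₂ ≤ k) (v : E → Fin k → 𝔽) :
    E → Fin (k - p₂) → 𝔽 :=
  fun e r => v e (Fin.cast (Nat.add_sub_cancel' hp) (Fin.natAdd p₂ r))

/-- `q`-representative subfamily with respect to an abstract independence predicate `Indep`
on finite subsets of the ground set. -/
def RepFam {E : Type*} [DecidableEq E] (Indep : Finset E → Prop) (q : ℕ)
    (Shat Sfam : Set (Finset E)) : Prop :=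
  Shat ⊆ Sfam ∧ ∀ Y : Finset E, Y.card ≤ q →
    (∃ X ∈ Sfam, Disjoint X Y ∧ Indep (X ∪ Y)) →
    ∃ X' ∈ Shat, Disjoint X' Y ∧ Indep (X' ∪ Y)

/-!
The columns of `S` are the unit vectors `e₀, …, e_{p₂-1}`, a basis of the kernel of the
projection onto the last `k − p₂` coordinates. So for `Z` disjoint from `S`, independence of
`Z ∪ S` is independence of `Z` modulo the span of `S`, i.e. independence of the projected columns
of `Z`: `Z ∪ S` is independent in `M` iff `Z` is independent in `M/S`. Applied to `Z = X ∪ Y`,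
this moves the representativity condition back and forth between `M` and `M/S`.
-/

open Submodule LinearMap

theorem LinearIndepOn.comp_iff_union {R M M' ι : Type*} [Ring R] [AddCommGroup M] [Module R M]
    [AddCommGroup M'] [Module R M'] {f : ι → M} {π : M →ₗ[R] M'} {s t : Set ι}
    (hs : LinearIndepOn R f s) (hker : span R (f '' s) = ker π) (hst : Disjoint s t) :
    LinearIndepOn R (π ∘ f) t ↔ LinearIndepOn R f (s ∪ t) := by
  rw [← hs.quotient_iff_union hst, hker, ← (ker π).liftQ_mkQ π le_rfl, coe_comp,
    Function.comp_assoc]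
  exact LinearMap.linearIndependent_iff _ (ker_liftQ_eq_bot _ _ _ le_rfl)

section LowerBlock

variable {𝔽 : Type*} [Field 𝔽] {k p₂ : ℕ} (hp : p₂ ≤ k)

def lowProj : (Fin k → 𝔽) →ₗ[𝔽] Fin (k - p₂) → 𝔽 :=
  funLeft 𝔽 𝔽 fun r => Fin.cast (Nat.add_sub_cancel' hp) (Fin.natAdd p₂ r)

theorem lowPart_eq_lowProj_comp {E : Type*} (v : E → Fin k → 𝔽) :
    lowPart p₂ hp v = lowProj hp ∘ v :=
  rfl

theorem mem_ker_lowProj {g : Fin k → 𝔽} :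
    g ∈ ker (lowProj hp) ↔ ∀ j : Fin k, p₂ ≤ j → g j = 0 := by
  simp only [mem_ker, lowProj, funext_iff, funLeft_apply, Pi.zero_apply]
  refine ⟨fun h j hj => ?_, fun h r => h _ (by simp)⟩
  convert h ⟨j - p₂, by omega⟩
  ext
  simp only [Fin.val_cast, Fin.val_natAdd]
  omega

theorem ker_lowProj :
    ker (lowProj hp) = span 𝔽 (Set.range (Pi.basisFun 𝔽 (Fin k) ∘ Fin.castLE hp)) := by
  apply le_antisymm
  · intro g hg
    rw [← (Pi.basisFun 𝔽 (Fin k)).sum_repr g]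
    refine sum_mem fun j _ => ?_
    rcases lt_or_ge (j : ℕ) p₂ with hj | hj
    · exact smul_mem _ _ (subset_span ⟨⟨j, hj⟩, rfl⟩)
    · simp [(mem_ker_lowProj hp).1 hg j hj]
  · rw [span_le]
    rintro _ ⟨i, rfl⟩
    refine (mem_ker_lowProj hp).2 fun j hj => ?_
    simp only [Function.comp_apply, Pi.basisFun_apply]
    refine Pi.single_eq_of_ne ?_ _
    rintro rfl
    simp only [Fin.val_castLE] at hj
    omega

variable {E : Type*} {v : E → Fin k → 𝔽} {S : Set E}

theorem linearIndepOn_of_eq_basisFun_castLE (τ : S ≃ Fin p₂)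
    (hv : ∀ s : S, v s = Pi.basisFun 𝔽 (Fin k) (Fin.castLE hp (τ s))) :
    LinearIndepOn 𝔽 v S := by
  have : (fun s : S => v s) = Pi.basisFun 𝔽 (Fin k) ∘ Fin.castLE hp ∘ τ := funext hv
  rw [LinearIndepOn, this]
  exact (Pi.basisFun 𝔽 (Fin k)).linearIndependent.comp _
    ((Fin.castLE_injective hp).comp τ.injective)

theorem span_image_eq_ker_lowProj (τ : S ≃ Fin p₂)
    (hv : ∀ s : S, v s = Pi.basisFun 𝔽 (Fin k) (Fin.castLE hp (τ s))) :
    span 𝔽 (v '' S) = ker (lowProj hp) := by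
  rw [ker_lowProj, Set.image_eq_range, funext hv, ← τ.symm.surjective.range_comp]
  simp [Function.comp_def]

theorem linearIndepOn_union_iff_lowPart (τ : S ≃ Fin p₂)
    (hv : ∀ s : S, v s = Pi.basisFun 𝔽 (Fin k) (Fin.castLE hp (τ s)))
    {Z : Set E} (hZS : Disjoint Z S) :
    LinearIndepOn 𝔽 v (Z ∪ S) ↔ LinearIndepOn 𝔽 (lowPart p₂ hp v) Z := by
  rw [Set.union_comm, lowPart_eq_lowProj_comp]
  exact ((linearIndepOn_of_eq_basisFun_castLE hp τ hv).comp_iff_union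
    (span_image_eq_ker_lowProj hp τ hv) hZS.symm).symm

end LowerBlock

/-- Let `M` be a linear matroid of rank `k` represented by a matrix in the block form
`(I, A'; 0, B)` with the identity block on the columns of an independent set `S` of size `p₂`,
and let `L` be a `p₁`-family of sets, each disjoint from `S` and with `X ∪ S` independent in
`M` (so that `L • {S} = {X ∪ S : X ∈ L}`). If `L̂ ⊆ L` is `(k−p₁−p₂)`-representative for
`L(S) = L` in the contracted matroid `M/S` (represented by `B`), then
`{X ∪ S : X ∈ L̂}` is `(k−p₁−p₂)`-representative for `L • {S}` in `M`. -/
theorem repFam_slice_of_repFam_contract {𝔽 E : Type*} [Field 𝔽] [DecidableEq E]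
    {k : ℕ} (p₁ p₂ : ℕ) (hp : p₂ ≤ k) (v : E → Fin k → 𝔽)
    (S : Finset E) (hScard : S.card = p₂)
    (σ : {x // x ∈ S} → Fin p₂) (hσ : Function.Injective σ)
    (hSform : ∀ (s : E) (hs : s ∈ S),
      v s = fun r : Fin k => if (r : ℕ) = (σ ⟨s, hs⟩ : ℕ) then 1 else 0)
    (L Lhat : Set (Finset E))
    (hL : ∀ X ∈ L, X.card = p₁ ∧ Disjoint X S ∧
      LinearIndependent 𝔽 (fun z : {x // x ∈ X ∪ S} => v z.1))
    (hrep : RepFam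
      (fun Z => Disjoint Z S ∧ LinearIndependent 𝔽 (fun z : {x // x ∈ Z} => lowPart p₂ hp v z.1))
      (k - p₁ - p₂) Lhat L) :
    RepFam (fun Z => LinearIndependent 𝔽 (fun z : {x // x ∈ Z} => v z.1)) (k - p₁ - p₂)
      ((fun X => X ∪ S) '' Lhat) ((fun X => X ∪ S) '' L) := by
  have hσbij : Function.Bijective σ :=
    (Fintype.bijective_iff_injective_and_card σ).2 ⟨hσ, by simp [hScard]⟩
  set τ := Equiv.ofBijective σ hσbij
  have hv : ∀ s : (S : Set E), v s = Pi.basisFun 𝔽 (Fin k) (Fin.castLE hp (τ s)) := by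
    intro s
    ext r
    simp [hSform s s.2, Pi.single_apply, Fin.ext_iff, τ]
  have indep_union_iff : ∀ Z : Finset E, Disjoint Z S →
      (LinearIndepOn 𝔽 v ↑(Z ∪ S) ↔ LinearIndepOn 𝔽 (lowPart p₂ hp v) ↑Z) := by
    intro Z hZS
    rw [Finset.coe_union]
    exact linearIndepOn_union_iff_lowPart hp τ hv (Finset.disjoint_coe.2 hZS)
  refine ⟨Set.image_mono hrep.1, ?_⟩
  rintro Y hY ⟨_, ⟨X, hX, rfl⟩, hXSY, hind⟩
  rw [Finset.disjoint_union_left] at hXSY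
  have hXYS : Disjoint (X ∪ Y) S := Finset.disjoint_union_left.2 ⟨(hL X hX).2.1, hXSY.2.symm⟩
  rw [Finset.union_right_comm] at hind
  obtain ⟨X', hX', hX'Y, hX'YS, hlow⟩ :=
    hrep.2 Y hY ⟨X, hX, hXSY.1, hXYS, (indep_union_iff _ hXYS).1 hind⟩
  refine ⟨X' ∪ S, ⟨X', hX', rfl⟩, Finset.disjoint_union_left.2 ⟨hX'Y, hXSY.2⟩, ?_⟩
  rw [Finset.union_right_comm]
  exact (indep_union_iff _ hX'YS).2 hlow
end

section
/- Let G be a graph, X₁ and X₂ vertex sets with E(G[X₁]) ∩ E(G[X₂]) = ∅ whose union covers the edges of G, and Z a separator. If U₁ ⊆ X₁ and U₂ ⊆ X₂ each induce forests and the union of their 'boundary forests' F(G[U₁]) ∪ F(G[U₂] ∖ E(Z)) (spanning forests of the induced component-partitions on Z) is acyclic in the complete graph on Z, then G[U₁ ∪ U₂] is a forest. -/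
/-!
Every edge of `G[U₁ ∪ U₂]` lies in one of the forests `A = G[U₁]` and `B = G[U₂] ∖ E(Z)`, and a
vertex carrying an edge of each lies in `Z`. A cycle of `A ⊔ B` lying in neither forest therefore
passes through some `z₀ ∈ Z` along one `A`-edge and one `B`-edge. Let `K` be the forest `H₁ ⊔ H₂`
with the `H₁`-edges at `z₀` removed. Walking around the cycle backwards from the `B`-edge at `z₀`,
the ends of the maximal runs of `A`-edges and of `B`-edges lie in `Z` and stay in the
`K`-component of `z₀`: a `B`-run is replaced by an `H₂`-path, an `A`-run by an `H₁`-path, and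
the latter cannot pass through `z₀`, since `z₀` would then be joined to one vertex by two paths of
`H₁ ⊔ H₂`, one starting with an `H₁`-edge and one not. The last `A`-run, which starts at `z₀`,
produces exactly such a pair of paths.
-/

/-- The subgraph of `G` consisting of the edges with both endpoints in `U`
(an induced subgraph, viewed as a graph on the same vertex set). -/
def restrictSet {V : Type*} (G : SimpleGraph V) (U : Set V) : SimpleGraph V where
  Adj u v := G.Adj u v ∧ u ∈ U ∧ v ∈ U
  symm := by
    constructor
    intro u v h
    exact ⟨h.1.symm, h.2.2, h.2.1⟩
  loopless := by
    constructor
    intro u h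
    exact G.irrefl h.1

/-- The subgraph of `G` consisting of the edges with both endpoints in `U` but not both
endpoints in `Z` (i.e. `G[U] ∖ E(Z)`). -/
def restrictSetMinus {V : Type*} (G : SimpleGraph V) (U Z : Set V) : SimpleGraph V where
  Adj u v := G.Adj u v ∧ u ∈ U ∧ v ∈ U ∧ ¬ (u ∈ Z ∧ v ∈ Z)
  symm := by
    constructor
    intro u v h
    exact ⟨h.1.symm, h.2.2.1, h.2.1, fun hc => h.2.2.2 ⟨hc.2, hc.1⟩⟩
  loopless := by
    constructor
    intro u h
    exact G.irrefl h.1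

namespace SimpleGraph

variable {V : Type*}

theorem IsAcyclic.eq_of_reachable_of_reachable {T H K : SimpleGraph V} {u v : V}
    (hT : T.IsAcyclic) (hH : H ≤ T) (hK : K ≤ T) (hHK : ∀ w, H.Adj u w → ¬K.Adj u w)
    (hHr : H.Reachable u v) (hKr : K.Reachable u v) : u = v := by
  by_contra huv
  obtain ⟨p, hp⟩ := hHr.exists_isPath
  obtain ⟨q, hq⟩ := hKr.exists_isPath
  have hpq : p.edges = q.edges := by
    have := congrArg (fun P : T.Path u v => P.1.edges)
      ((hT.subsingleton_path u v).elim ⟨_, hp.mapLe hH⟩ ⟨_, hq.mapLe hK⟩)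
    simpa only [Walk.edges_mapLe_eq_edges] using this
  have hp₀ : ¬p.Nil := Walk.not_nil_of_ne huv
  exact hHK _ (p.adj_snd hp₀) (q.edges_subset_edgeSet (hpq ▸ p.mk_start_snd_mem_edges hp₀))

theorem Walk.edges_subset_or_exists_adj_adj {A B : SimpleGraph V} {x y : V}
    (w : (A ⊔ B).Walk x y) :
    (∀ e ∈ w.edges, e ∈ A.edgeSet) ∨ (∀ e ∈ w.edges, e ∈ B.edgeSet) ∨
      ∃ z a b, A.Adj z a ∧ B.Adj z b ∧ s(z, a) ∈ w.edges ∧ s(z, b) ∈ w.edges := by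
  induction w with
  | nil => simp
  | @cons x y _ h p ih =>
    rcases ih with hpA | hpB | ⟨z, a, b, ha, hb, hea, heb⟩
    · by_cases hA : A.Adj x y
      · exact .inl (by simpa [hA] using hpA)
      cases p with
      | nil => exact .inr (.inl (by simpa using h.resolve_left hA))
      | @cons _ v _ h' p' =>
        exact .inr (.inr ⟨y, v, x, hpA s(y, v) (by simp), (h.resolve_left hA).symm, by simp,
          by simp⟩)
    · by_cases hB : B.Adj x y
      · exact .inr (.inl (by simpa [hB] using hpB))
      cases p with
      | nil => exact .inl (by simpa using h.resolve_right hB)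
      | @cons _ v _ h' p' =>
        exact .inr (.inr ⟨y, x, v, (h.resolve_right hB).symm, hpB s(y, v) (by simp), by simp,
          by simp⟩)
    · exact .inr (.inr ⟨z, a, b, ha, hb, by simp [hea], by simp [heb]⟩)

theorem Walk.IsCycle.exists_walk_notMem_support {G : SimpleGraph V} {z : V} {c : G.Walk z z}
    (hc : c.IsCycle) :
    ∃ v₁ u, G.Adj z v₁ ∧ G.Adj u z ∧ (∃ q : G.Walk v₁ u, z ∉ q.support) ∧
      ∀ a, s(z, a) ∈ c.edges → a = v₁ ∨ a = u := by
  cases c with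
  | nil => exact (Walk.not_isCycle_nil hc).elim
  | @cons _ v₁ _ h p =>
    cases p with
    | nil => exact absurd h (G.loopless.irrefl _)
    | cons h' p' =>
      obtain ⟨u, q, h₂, hqp⟩ := Walk.exists_cons_eq_concat h' p'
      rw [Walk.cons_isCycle_iff, hqp, Walk.concat_isPath_iff] at hc
      refine ⟨v₁, u, h, h₂, ⟨q, hc.1.2⟩, fun a ha => ?_⟩
      rw [hqp, Walk.edges_cons, Walk.edges_concat] at ha
      simp only [List.concat_eq_append, List.mem_cons, List.mem_append, List.not_mem_nil,
        or_false] at ha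
      rcases ha with ha | ha | ha
      · exact .inl (Sym2.congr_right.mp ha)
      · exact absurd (q.fst_mem_support_of_mem_edges ha) hc.1.2
      · exact .inr (Sym2.congr_right.mp (ha.trans Sym2.eq_swap))

section Gluing

variable {A B H₁ H₂ : SimpleGraph V} {Z : Set V} {z₀ : V}

theorem eq_of_reachable_of_reachable_deleteIncidenceSet_sup (hT : (H₁ ⊔ H₂).IsAcyclic)
    (hdisj : Disjoint H₁.edgeSet H₂.edgeSet) {z : V} (h₁ : H₁.Reachable z₀ z)
    (hK : (H₁.deleteIncidenceSet z₀ ⊔ H₂).Reachable z₀ z) : z₀ = z := by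
  refine hT.eq_of_reachable_of_reachable le_sup_left
    (sup_le_sup_right (deleteIncidenceSet_le _ _) _) (fun w hw hw' => ?_) h₁ hK
  rcases hw' with hw' | hw'
  · exact (deleteIncidenceSet_adj.mp hw').2.1 rfl
  · exact Set.disjoint_left.mp hdisj (show s(z₀, w) ∈ H₁.edgeSet from hw) hw'

theorem reachable_deleteIncidenceSet_sup_of_reachable_left (hT : (H₁ ⊔ H₂).IsAcyclic)
    (hdisj : Disjoint H₁.edgeSet H₂.edgeSet) {y z : V} (hz : z ≠ z₀) (h₁ : H₁.Reachable y z)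
    (hK : (H₁.deleteIncidenceSet z₀ ⊔ H₂).Reachable z z₀) :
    (H₁.deleteIncidenceSet z₀ ⊔ H₂).Reachable y z₀ := by
  classical
  obtain ⟨p⟩ := h₁
  by_cases hz₀ : z₀ ∈ p.support
  · exact absurd (eq_of_reachable_of_reachable_deleteIncidenceSet_sup hT hdisj
      (p.dropUntil z₀ hz₀).reachable hK.symm).symm hz
  · have hp : ∀ e ∈ p.edges, e ∉ H₁.incidenceSet z₀ := fun e he he₀ =>
      hz₀ (p.mem_support_of_mem_edges he he₀.2)
    exact ((p.toDeleteEdges _ hp).reachable.mono le_sup_left).trans hK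

variable (A B H₁ H₂ Z) in
structure BoundaryForests : Prop where
  mem_of_adj_of_adj : ∀ ⦃v a b⦄, A.Adj v a → B.Adj v b → v ∈ Z
  reachable_left : ∀ ⦃u v⦄, u ∈ Z → v ∈ Z → A.Reachable u v → H₁.Reachable u v
  reachable_right : ∀ ⦃u v⦄, u ∈ Z → v ∈ Z → B.Reachable u v → H₂.Reachable u v
  disjoint : Disjoint H₁.edgeSet H₂.edgeSet
  acyclic : (H₁ ⊔ H₂).IsAcyclic

variable (H₁ H₂ z₀) in
def Anchored (X : SimpleGraph V) (S : Set V) (x : V) : Prop :=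
  ∃ z ∈ S, X.Reachable x z ∧ (H₁.deleteIncidenceSet z₀ ⊔ H₂).Reachable z z₀

variable (A B H₁ H₂ Z z₀) in
def NeighborsAnchored (y : V) : Prop :=
  ∀ x, (A.Adj x y → Anchored H₁ H₂ z₀ A (Z \ {z₀}) x) ∧ (B.Adj x y → Anchored H₁ H₂ z₀ B Z x)

theorem BoundaryForests.neighborsAnchored_of_adj (hF : BoundaryForests A B H₁ H₂ Z) {y y' : V}
    (hy : y ≠ z₀)
    (h : A.Adj y y' ∧ Anchored H₁ H₂ z₀ A (Z \ {z₀}) y ∨ B.Adj y y' ∧ Anchored H₁ H₂ z₀ B Z y) :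
    NeighborsAnchored A B H₁ H₂ Z z₀ y := by
  intro x
  rcases h with ⟨hyy', z, ⟨hz, hzz₀⟩, hyz, hK⟩ | ⟨hyy', z, hz, hyz, hK⟩
  · refine ⟨fun hxy => ⟨z, ⟨hz, hzz₀⟩, hxy.reachable.trans hyz, hK⟩, fun hxy => ?_⟩
    have hyZ : y ∈ Z := hF.mem_of_adj_of_adj hyy' hxy.symm
    exact ⟨y, hyZ, hxy.reachable, reachable_deleteIncidenceSet_sup_of_reachable_left
      hF.acyclic hF.disjoint hzz₀ (hF.reachable_left hyZ hz hyz) hK⟩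
  · refine ⟨fun hxy => ?_, fun hxy => ⟨z, hz, hxy.reachable.trans hyz, hK⟩⟩
    have hyZ : y ∈ Z := hF.mem_of_adj_of_adj hxy.symm hyy'
    exact ⟨y, ⟨hyZ, hy⟩, hxy.reachable,
      ((hF.reachable_right hyZ hz hyz).mono le_sup_right).trans hK⟩

theorem BoundaryForests.neighborsAnchored_of_walk (hF : BoundaryForests A B H₁ H₂ Z) {y u : V}
    (p : (A ⊔ B).Walk y u) (hp : z₀ ∉ p.support) (hu : NeighborsAnchored A B H₁ H₂ Z z₀ u) :
    NeighborsAnchored A B H₁ H₂ Z z₀ y := by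
  induction p with
  | nil => exact hu
  | @cons y v _ h p ih =>
    rw [Walk.support_cons, List.mem_cons, not_or] at hp
    have hv := ih hp.2 hu
    refine hF.neighborsAnchored_of_adj (y' := v) (Ne.symm hp.1) ?_
    rcases h with hA | hB
    · exact .inl ⟨hA, (hv y).1 hA⟩
    · exact .inr ⟨hB, (hv y).2 hB⟩

theorem BoundaryForests.false_of_adj_of_walk_of_adj (hF : BoundaryForests A B H₁ H₂ Z)
    (hz₀ : z₀ ∈ Z) {v₁ u : V} (hA : A.Adj z₀ v₁) (hB : B.Adj u z₀) (q : (A ⊔ B).Walk v₁ u)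
    (hq : z₀ ∉ q.support) : False := by
  have hu : NeighborsAnchored A B H₁ H₂ Z z₀ u :=
    hF.neighborsAnchored_of_adj (fun h => hq (h ▸ q.end_mem_support))
      (.inr ⟨hB, z₀, hz₀, hB.reachable, .refl _⟩)
  obtain ⟨z, ⟨hz, hzz₀⟩, hz₀z, hK⟩ := (hF.neighborsAnchored_of_walk q hq hu z₀).1 hA
  exact hzz₀ (eq_of_reachable_of_reachable_deleteIncidenceSet_sup hF.acyclic hF.disjoint
    (hF.reachable_left hz₀ hz hz₀z) hK.symm).symm

theorem BoundaryForests.isAcyclic_sup (hF : BoundaryForests A B H₁ H₂ Z) (hA : A.IsAcyclic)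
    (hB : B.IsAcyclic) : (A ⊔ B).IsAcyclic := by
  classical
  intro v c hc
  obtain hcA | hcB | ⟨z₀, a, b, ha, hb, hea, heb⟩ := c.edges_subset_or_exists_adj_adj
  · exact hA _ (hc.transfer hcA)
  · exact hB _ (hc.transfer hcB)
  have hz₀ : z₀ ∈ c.support := c.fst_mem_support_of_mem_edges hea
  obtain ⟨v₁, u, h₁, h₂, ⟨q, hq⟩, hends⟩ := (hc.rotate hz₀).exists_walk_notMem_support
  have hrot := c.rotate_edges z₀ hz₀
  have key : A.Adj z₀ v₁ ∧ B.Adj u z₀ ∨ A.Adj z₀ u ∧ B.Adj v₁ z₀ := by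
    rcases hends a (hrot.mem_iff.mpr hea) with rfl | rfl <;>
      rcases hends b (hrot.mem_iff.mpr heb) with rfl | rfl <;>
      rcases h₁ with h₁ | h₁ <;> rcases h₂ with h₂ | h₂ <;>
      simp_all [adj_comm]
  rcases key with ⟨hA₁, hB₁⟩ | ⟨hA₁, hB₁⟩
  · exact hF.false_of_adj_of_walk_of_adj (hF.mem_of_adj_of_adj ha hb) hA₁ hB₁ q hq
  · exact hF.false_of_adj_of_walk_of_adj (hF.mem_of_adj_of_adj ha hb) hA₁ hB₁ q.reverse
      (by simpa using hq)

end Gluing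

end SimpleGraph

open SimpleGraph

theorem restrictSetMinus_le_restrictSet {V : Type*} (G : SimpleGraph V) (U Z : Set V) :
    restrictSetMinus G U Z ≤ restrictSet G U :=
  fun _ _ h => ⟨h.1, h.2.1, h.2.2.1⟩

theorem restrictSet_union_le_sup {V : Type*} {G : SimpleGraph V} {X₁ X₂ Z U₁ U₂ : Set V}
    (hedge : ∀ u v, G.Adj u v → (u ∈ X₁ ∧ v ∈ X₁) ∨ (u ∈ X₂ ∧ v ∈ X₂))
    (hU₁ : U₁ ⊆ X₁) (hU₂ : U₂ ⊆ X₂) (hZ₁ : U₁ ∩ (X₁ ∩ X₂) = Z) (hZ₂ : U₂ ∩ (X₁ ∩ X₂) = Z) :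
    restrictSet G (U₁ ∪ U₂) ≤ restrictSet G U₁ ⊔ restrictSetMinus G U₂ Z := by
  have hX₁ : ∀ x ∈ U₁ ∪ U₂, x ∈ X₁ → x ∈ U₁ := by
    rintro x (hx | hx) hx₁
    · exact hx
    · have : x ∈ U₁ ∩ (X₁ ∩ X₂) := by rw [hZ₁, ← hZ₂]; exact ⟨hx, hx₁, hU₂ hx⟩
      exact this.1
  have hX₂ : ∀ x ∈ U₁ ∪ U₂, x ∈ X₂ → x ∈ U₂ := by
    rintro x (hx | hx) hx₂
    · have : x ∈ U₂ ∩ (X₁ ∩ X₂) := by rw [hZ₂, ← hZ₁]; exact ⟨hx, hU₁ hx, hx₂⟩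
      exact this.1
    · exact hx
  have hZU₁ : ∀ x ∈ Z, x ∈ U₁ := fun x hx => (hZ₁ ▸ hx : x ∈ U₁ ∩ (X₁ ∩ X₂)).1
  rintro u v ⟨huv, hu, hv⟩
  rcases hedge u v huv with ⟨hu', hv'⟩ | ⟨hu', hv'⟩
  · exact .inl ⟨huv, hX₁ u hu hu', hX₁ v hv hv'⟩
  by_cases huvZ : u ∈ Z ∧ v ∈ Z
  · exact .inl ⟨huv, hZU₁ u huvZ.1, hZU₁ v huvZ.2⟩
  · exact .inr ⟨huv, hX₂ u hu hu', hX₂ v hv hv', huvZ⟩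

theorem forest_of_boundary_forests_acyclic_general {V : Type*} (G : SimpleGraph V)
    (X₁ X₂ Z U₁ U₂ : Set V)
    (hedge : ∀ u v, G.Adj u v → (u ∈ X₁ ∧ v ∈ X₁) ∨ (u ∈ X₂ ∧ v ∈ X₂))
    (hU₁ : U₁ ⊆ X₁) (hU₂ : U₂ ⊆ X₂)
    (hZ₁ : U₁ ∩ (X₁ ∩ X₂) = Z) (hZ₂ : U₂ ∩ (X₁ ∩ X₂) = Z)
    (hF₁ : (restrictSet G U₁).IsAcyclic) (hF₂ : (restrictSet G U₂).IsAcyclic)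
    (H₁ H₂ : SimpleGraph V)
    (hH₁c : ∀ u v, u ∈ Z → v ∈ Z →
      (H₁.Reachable u v ↔ (restrictSet G U₁).Reachable u v))
    (hH₂c : ∀ u v, u ∈ Z → v ∈ Z →
      (H₂.Reachable u v ↔ (restrictSetMinus G U₂ Z).Reachable u v))
    (hdisj : Disjoint H₁.edgeSet H₂.edgeSet)
    (hacyc : (H₁ ⊔ H₂).IsAcyclic) :
    (restrictSet G (U₁ ∪ U₂)).IsAcyclic := by
  have hF : BoundaryForests (restrictSet G U₁) (restrictSetMinus G U₂ Z) H₁ H₂ Z :=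
    { mem_of_adj_of_adj := fun v _ _ ha hb => hZ₁ ▸ ⟨ha.2.1, hU₁ ha.2.1, hU₂ hb.2.1⟩
      reachable_left := fun u v hu hv => (hH₁c u v hu hv).mpr
      reachable_right := fun u v hu hv => (hH₂c u v hu hv).mpr
      disjoint := hdisj
      acyclic := hacyc }
  exact (hF.isAcyclic_sup hF₁ (hF₂.anti (restrictSetMinus_le_restrictSet G U₂ Z))).anti
    (restrictSet_union_le_sup hedge hU₁ hU₂ hZ₁ hZ₂)

/-- Let `G` be a graph every edge of which lies inside `X₁` or inside `X₂`, let `U₁ ⊆ X₁`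
and `U₂ ⊆ X₂` induce forests, and let `Z = U₁ ∩ (X₁ ∩ X₂) = U₂ ∩ (X₁ ∩ X₂)` be their common
trace on the separator `X₁ ∩ X₂`. Let `H₁` and `H₂` be "boundary forests" on `Z` (forests in
the complete graph on `Z`) such that two vertices of `Z` are connected in `H₁` iff they are
connected in `G[U₁]`, and connected in `H₂` iff they are connected in `G[U₂] ∖ E(Z)`.
If `H₁` and `H₂` are edge-disjoint and their union is acyclic, then `G[U₁ ∪ U₂]` is a
forest. -/
theorem forest_of_boundary_forests_acyclic {V : Type*} (G : SimpleGraph V)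
    (X₁ X₂ Z U₁ U₂ : Set V)
    (hedge : ∀ u v, G.Adj u v → (u ∈ X₁ ∧ v ∈ X₁) ∨ (u ∈ X₂ ∧ v ∈ X₂))
    (hU₁ : U₁ ⊆ X₁) (hU₂ : U₂ ⊆ X₂)
    (hZ₁ : U₁ ∩ (X₁ ∩ X₂) = Z) (hZ₂ : U₂ ∩ (X₁ ∩ X₂) = Z)
    (hF₁ : (restrictSet G U₁).IsAcyclic) (hF₂ : (restrictSet G U₂).IsAcyclic)
    (H₁ H₂ : SimpleGraph V)
    (hH₁a : H₁.IsAcyclic) (hH₁s : ∀ u v, H₁.Adj u v → u ∈ Z ∧ v ∈ Z)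
    (hH₁c : ∀ u v, u ∈ Z → v ∈ Z →
      (H₁.Reachable u v ↔ (restrictSet G U₁).Reachable u v))
    (hH₂a : H₂.IsAcyclic) (hH₂s : ∀ u v, H₂.Adj u v → u ∈ Z ∧ v ∈ Z)
    (hH₂c : ∀ u v, u ∈ Z → v ∈ Z →
      (H₂.Reachable u v ↔ (restrictSetMinus G U₂ Z).Reachable u v))
    (hdisj : Disjoint H₁.edgeSet H₂.edgeSet)
    (hacyc : (H₁ ⊔ H₂).IsAcyclic) :
    (restrictSet G (U₁ ∪ U₂)).IsAcyclic :=
  forest_of_boundary_forests_acyclic_general G X₁ X₂ Z U₁ U₂ hedge hU₁ hU₂ hZ₁ hZ₂ hF₁ hF₂ H₁ H₂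
    hH₁c hH₂c hdisj hacyc
end
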